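/- arXiv:0810.0184 — 4 statements merged into one kernel-verified Lean document; each statement's English description precedes it below -/
import Mathlib

section
/- Periodicity of complex Clifford algebras: for all m, n ∈ ℕ there is an isomorphism of ℂ-algebras C(2m+n) ≅ C(2m) ⊗[ℂ] C(n), where ⊗[ℂ] denotes the (ungraded) tensor product of ℂ-algebras. -/
/-!
Let `Γ = i ω₀ ω₁ ∈ C(2)`: it is even, `Γ² = 1`, and it anticommutes with every vector of `ℂ²`.
Then `C(2 + r) ≅ C(2) ⊗ C(r)` by sending the first two generators `ω` to `ω ⊗ 1` and the
remaining ones to `Γ ⊗ ω`: these images still square to `1` and anticommute pairwise, and the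
inverse sends `1 ⊗ ω` to `Γ ω`, which commutes with `C(2)` because `Γ` is even. Only these three
properties of `Γ` matter, so the same maps give `Cl(Q₁ ⊕ Q₂) ≅ Cl(Q₁) ⊗ Cl(Q₂)` whenever
`Cl(Q₁)` contains such an element.
Iterating the step and reassociating the tensor product gives `C(2m + n) ≅ C(2m) ⊗ C(n)`.
-/

open scoped TensorProduct

/-- The quadratic form `Q_r` on `Fin r → ℂ` given by `Q_r v = ∑ i, (v i)^2`. -/
noncomputable def Qf (r : ℕ) : QuadraticForm ℂ (Fin r → ℂ) :=
  QuadraticMap.weightedSumSquares ℂ (fun _ : Fin r => (1 : ℂ))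

/-- The complex Clifford algebra `C(r)` on `r` generators `ω_i = ι (e_i)`,
satisfying `ω_i² = 1` and `ω_i ω_j = −ω_j ω_i` for `i ≠ j`. -/
noncomputable abbrev CliffordC (r : ℕ) := CliffordAlgebra (Qf r)

namespace CliffordAlgebra

variable {R M M₁ M₂ A : Type*} [CommRing R] [AddCommGroup M] [AddCommGroup M₁]
  [AddCommGroup M₂] [Module R M] [Module R M₁] [Module R M₂] [Ring A] [Algebra R A]

lemma commute_of_commute_ι {Q₁ : QuadraticForm R M₁} {Q₂ : QuadraticForm R M₂}
    (f : CliffordAlgebra Q₁ →ₐ[R] A) (g : CliffordAlgebra Q₂ →ₐ[R] A)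
    (h : ∀ m₁ m₂, Commute (f (ι Q₁ m₁)) (g (ι Q₂ m₂))) (x : CliffordAlgebra Q₁)
    (y : CliffordAlgebra Q₂) : Commute (f x) (g y) := by
  induction x using CliffordAlgebra.induction with
  | algebraMap c => rw [AlgHom.commutes]; exact Algebra.commute_algebraMap_left _ _
  | add a b ha hb => rw [map_add]; exact ha.add_left hb
  | mul a b ha hb => rw [map_mul]; exact ha.mul_left hb
  | ι m₁ =>
    induction y using CliffordAlgebra.induction with
    | algebraMap c => rw [AlgHom.commutes]; exact Algebra.commute_algebraMap_right _ _
    | add a b ha hb => rw [map_add]; exact ha.add_right hb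
    | mul a b ha hb => rw [map_mul]; exact ha.mul_right hb
    | ι m₂ => exact h m₁ m₂

def equivOfSubsingleton [Subsingleton M] (Q : QuadraticForm R M) : CliffordAlgebra Q ≃ₐ[R] R :=
  (equivOfIsometry ⟨LinearEquiv.ofSubsingleton M Unit, fun m => by
    simp [Subsingleton.elim m 0]⟩).trans CliffordAlgebraRing.equiv

structure IsChiralityElement {Q : QuadraticForm R M} (Γ : CliffordAlgebra Q) : Prop where
  mem_evenOdd_zero : Γ ∈ evenOdd Q 0
  mul_self : Γ * Γ = 1
  ι_mul : ∀ m, ι Q m * Γ = -(Γ * ι Q m)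

namespace IsChiralityElement

variable {Q₁ : QuadraticForm R M₁} (Q₂ : QuadraticForm R M₂) {Γ : CliffordAlgebra Q₁}
  (hΓ : IsChiralityElement Γ)
include hΓ

lemma commute_map_inl_ι_inr (m₂ : M₂) :
    Commute (map (.inl Q₁ Q₂) Γ) (ι (Q₁.prod Q₂) (0, m₂)) := by
  simpa using commute_map_mul_map_of_isOrtho_of_mem_evenOdd_zero_left (.inl Q₁ Q₂)
    (.inr Q₁ Q₂) (fun _ _ => .inl_inr _ _) _ _ hΓ.mem_evenOdd_zero (ι_mem_evenOdd_one Q₂ m₂)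

lemma map_inl_mul_self : map (.inl Q₁ Q₂) Γ * map (.inl Q₁ Q₂) Γ = 1 := by
  rw [← map_mul, hΓ.mul_self, map_one]

def toProdRight : CliffordAlgebra Q₂ →ₐ[R] CliffordAlgebra (Q₁.prod Q₂) :=
  lift Q₂ ⟨LinearMap.mulLeft R (map (.inl Q₁ Q₂) Γ) ∘ₗ ι _ ∘ₗ LinearMap.inr R M₁ M₂,
    fun m₂ => by
      simp only [LinearMap.comp_apply, LinearMap.inr_apply, LinearMap.mulLeft_apply]
      rw [mul_assoc, ← mul_assoc _ (map _ Γ), ← (hΓ.commute_map_inl_ι_inr Q₂ m₂).eq,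
        mul_assoc, ← mul_assoc, hΓ.map_inl_mul_self, one_mul, ι_sq_scalar]
      simp⟩

lemma toProdRight_ι (m₂ : M₂) :
    hΓ.toProdRight Q₂ (ι Q₂ m₂) = map (.inl Q₁ Q₂) Γ * ι _ (0, m₂) := by
  rw [toProdRight, lift_ι_apply]
  rfl

lemma ι_inl_mul_map_inl (m₁ : M₁) :
    ι (Q₁.prod Q₂) (m₁, 0) * map (.inl Q₁ Q₂) Γ = -(map (.inl Q₁ Q₂) Γ * ι _ (m₁, 0)) := by
  rw [← QuadraticMap.Isometry.inl_apply Q₁ Q₂, ← map_apply_ι, ← map_mul, hΓ.ι_mul, map_neg,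
    map_mul]

def toProd :
    CliffordAlgebra Q₁ ⊗[R] CliffordAlgebra Q₂ →ₐ[R] CliffordAlgebra (Q₁.prod Q₂) :=
  Algebra.TensorProduct.lift (map (.inl Q₁ Q₂)) (hΓ.toProdRight Q₂) <|
    commute_of_commute_ι _ _ fun m₁ m₂ => by
      rw [map_apply_ι, hΓ.toProdRight_ι, QuadraticMap.Isometry.inl_apply]
      have h := ι_mul_ι_comm_of_isOrtho (QuadraticMap.IsOrtho.inl_inr (Q₁ := Q₁) (Q₂ := Q₂) m₁ m₂)
      rw [Commute, SemiconjBy, ← mul_assoc, hΓ.ι_inl_mul_map_inl, neg_mul, mul_assoc, h,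
        mul_neg, neg_neg, mul_assoc]

def ofProd :
    CliffordAlgebra (Q₁.prod Q₂) →ₐ[R] CliffordAlgebra Q₁ ⊗[R] CliffordAlgebra Q₂ :=
  lift (Q₁.prod Q₂) ⟨LinearMap.coprod
      ((Algebra.TensorProduct.includeLeft (S := R)).toLinearMap ∘ₗ ι Q₁)
      (TensorProduct.mk R _ _ Γ ∘ₗ ι Q₂),
    fun m => by
      simp only [LinearMap.coprod_apply, LinearMap.comp_apply, AlgHom.toLinearMap_apply,
        Algebra.TensorProduct.includeLeft_apply, TensorProduct.mk_apply, add_mul, mul_add,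
        Algebra.TensorProduct.tmul_mul_tmul, ι_sq_scalar, hΓ.ι_mul, hΓ.mul_self, mul_one,
        one_mul]
      rw [TensorProduct.neg_tmul, QuadraticMap.prod_apply, map_add,
        Algebra.TensorProduct.algebraMap_apply, ← Algebra.TensorProduct.algebraMap_apply']
      abel⟩

lemma ofProd_ι (m₁ : M₁) (m₂ : M₂) :
    hΓ.ofProd Q₂ (ι _ (m₁, m₂)) = ι Q₁ m₁ ⊗ₜ 1 + Γ ⊗ₜ ι Q₂ m₂ := by
  rw [ofProd, lift_ι_apply]
  rfl

lemma ofProd_comp_map_inl : (hΓ.ofProd Q₂).comp (map (.inl Q₁ Q₂)) =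
    Algebra.TensorProduct.includeLeft := by
  ext m₁
  simp [hΓ.ofProd_ι]

lemma toProd_comp_ofProd : (hΓ.toProd Q₂).comp (hΓ.ofProd Q₂) = AlgHom.id R _ := by
  ext m <;> dsimp
  · rw [hΓ.ofProd_ι, map_zero, TensorProduct.tmul_zero, add_zero, toProd,
      Algebra.TensorProduct.lift_tmul, map_one, mul_one, map_apply_ι,
      QuadraticMap.Isometry.inl_apply]
  · rw [hΓ.ofProd_ι, map_zero, TensorProduct.zero_tmul, zero_add, toProd,
      Algebra.TensorProduct.lift_tmul, hΓ.toProdRight_ι, ← mul_assoc, hΓ.map_inl_mul_self,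
      one_mul]

lemma ofProd_comp_toProd : (hΓ.ofProd Q₂).comp (hΓ.toProd Q₂) = AlgHom.id R _ := by
  ext m <;> dsimp only [AlgHom.comp_toLinearMap, LinearMap.coe_comp, Function.comp_apply,
    AlgHom.toLinearMap_apply, TensorProduct.AlgebraTensorModule.mk_apply,
    Algebra.TensorProduct.includeLeft_apply, Algebra.TensorProduct.includeRight_apply,
    AlgHom.restrictScalars_apply, AlgHom.comp_apply, AlgHom.id_apply]
  · rw [toProd, Algebra.TensorProduct.lift_tmul, map_one, mul_one, map_apply_ι,
      QuadraticMap.Isometry.inl_apply, hΓ.ofProd_ι, map_zero, TensorProduct.tmul_zero, add_zero]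
  · have hΓ' : hΓ.ofProd Q₂ (map (.inl Q₁ Q₂) Γ) = Γ ⊗ₜ 1 :=
      AlgHom.congr_fun (hΓ.ofProd_comp_map_inl Q₂) Γ
    rw [toProd, Algebra.TensorProduct.lift_tmul, map_one, one_mul, hΓ.toProdRight_ι, map_mul,
      hΓ', hΓ.ofProd_ι, map_zero, TensorProduct.zero_tmul, zero_add,
      Algebra.TensorProduct.tmul_mul_tmul, hΓ.mul_self, one_mul]

def prodEquiv :
    CliffordAlgebra (Q₁.prod Q₂) ≃ₐ[R] CliffordAlgebra Q₁ ⊗[R] CliffordAlgebra Q₂ :=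
  .ofAlgHom (hΓ.ofProd Q₂) (hΓ.toProd Q₂) (hΓ.ofProd_comp_toProd Q₂)
    (hΓ.toProd_comp_ofProd Q₂)

end IsChiralityElement

lemma isChiralityElement_I_smul_ι_mul_ι [Module ℂ M] {Q : QuadraticForm ℂ M} {u v : M}
    (hu : Q u = 1) (hv : Q v = 1) (huv : Q.IsOrtho u v) (hspan : Submodule.span ℂ {u, v} = ⊤) :
    IsChiralityElement (Complex.I • (ι Q u * ι Q v)) := by
  have huu : ι Q u * ι Q u = 1 := by rw [ι_sq_scalar, hu, map_one]
  have hvv : ι Q v * ι Q v = 1 := by rw [ι_sq_scalar, hv, map_one]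
  have hvu : ι Q v * ι Q u = -(ι Q u * ι Q v) := ι_mul_ι_comm_of_isOrtho huv.symm
  have hu' : ι Q u * (ι Q u * ι Q v) = -(ι Q u * ι Q v * ι Q u) := by
    rw [← mul_assoc, huu, mul_assoc, hvu, mul_neg, ← mul_assoc, huu, neg_neg]
  have hv' : ι Q v * (ι Q u * ι Q v) = -(ι Q u * ι Q v * ι Q v) := by
    rw [← mul_assoc, hvu, neg_mul, mul_assoc, hvv]
  refine ⟨Submodule.smul_mem _ _ (ι_mul_ι_mem_evenOdd_zero Q u v), ?_, fun m => ?_⟩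
  · have hsq : ι Q u * ι Q v * (ι Q u * ι Q v) = -1 := by
      rw [mul_assoc, ← mul_assoc (ι Q v), hvu, neg_mul, mul_neg, ← mul_assoc, ← mul_assoc, huu,
        one_mul, hvv]
    rw [smul_mul_smul_comm, Complex.I_mul_I, hsq, neg_one_smul, neg_neg]
  · obtain ⟨c, d, rfl⟩ := Submodule.mem_span_pair.mp (hspan ▸ Submodule.mem_top : m ∈ _)
    simp only [map_add, map_smul, add_mul, mul_add, smul_mul_assoc, mul_smul_comm, hu', hv']
    module

end CliffordAlgebra

open CliffordAlgebra

lemma Qf_apply (r : ℕ) (v : Fin r → ℂ) : Qf r v = ∑ i, v i * v i := by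
  simp [Qf, QuadraticMap.weightedSumSquares_apply]

lemma Qf_single {r : ℕ} (i : Fin r) : Qf r (Pi.single i 1) = 1 := by
  simp [Qf_apply, Pi.single_apply]

lemma Qf_isOrtho_single {r : ℕ} {i j : Fin r} (h : i ≠ j) :
    (Qf r).IsOrtho (Pi.single i 1) (Pi.single j 1) := by
  rw [QuadraticMap.isOrtho_def]
  simp [Qf_apply, Pi.single_apply, mul_add, Finset.sum_add_distrib, h, h.symm]

noncomputable def Qf.isometryEquivProd (a b : ℕ) :
    (Qf (a + b)).IsometryEquiv ((Qf a).prod (Qf b)) where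
  toLinearEquiv := LinearEquiv.funCongrLeft ℂ ℂ finSumFinEquiv ≪≫ₗ
    LinearEquiv.sumArrowLequivProdArrow _ _ ℂ ℂ
  map_app' v := by
    simp [Qf_apply, Fin.sum_univ_add]

lemma CliffordC.isChiralityElement_two :
    IsChiralityElement (Complex.I • (ι (Qf 2) (Pi.single 0 1) * ι (Qf 2) (Pi.single 1 1))) :=
  isChiralityElement_I_smul_ι_mul_ι (Qf_single 0) (Qf_single 1)
    (Qf_isOrtho_single (by decide)) <| eq_top_iff.mpr fun w _ =>
      Submodule.mem_span_pair.mpr ⟨w 0, w 1, by ext i; fin_cases i <;> simp⟩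

noncomputable def CliffordC.twoAddEquiv (r : ℕ) :
    CliffordC (2 + r) ≃ₐ[ℂ] CliffordC 2 ⊗[ℂ] CliffordC r :=
  (equivOfIsometry (Qf.isometryEquivProd 2 r)).trans
    (CliffordC.isChiralityElement_two.prodEquiv (Qf r))

/-- Periodicity of complex Clifford algebras:
`C(2m+n) ≅ C(2m) ⊗[ℂ] C(n)` as ℂ-algebras. -/
theorem clifford_periodicity (m n : ℕ) :
    Nonempty (CliffordC (2 * m + n) ≃ₐ[ℂ] (CliffordC (2 * m) ⊗[ℂ] CliffordC n)) := by
  induction m with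
  | zero =>
    rw [Nat.mul_zero, Nat.zero_add]
    exact ⟨(Algebra.TensorProduct.lid ℂ (CliffordC n)).symm.trans
      (Algebra.TensorProduct.congr (equivOfSubsingleton (Qf 0)).symm .refl)⟩
  | succ m ih =>
    obtain ⟨e⟩ := ih
    rw [show 2 * (m + 1) + n = 2 + (2 * m + n) by ring, show 2 * (m + 1) = 2 + 2 * m by ring]
    exact ⟨(CliffordC.twoAddEquiv _).trans <| (Algebra.TensorProduct.congr .refl e).trans <|
      (Algebra.TensorProduct.assoc ℂ ℂ ℂ _ _ _).symm.trans <|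
      Algebra.TensorProduct.congr (CliffordC.twoAddEquiv _).symm .refl⟩
end

section
/- In the spin representation of the even Clifford algebra on the exterior algebra of ℂ^n, the product of all 2n generators equals i^n times the parity operator: the composite of linear endomorphisms ω_1 ∘ ω_2 ∘ ⋯ ∘ ω_{2n} equals i^n · σ, where σ is the grading involution. -/
noncomputable section

variable (n : ℕ)

/-- The exterior algebra `E = Λ(ℂ^n)`, i.e. the Clifford algebra of the zero
quadratic form on `Fin n → ℂ`. -/
abbrev ExtC (n : ℕ) := ExteriorAlgebra ℂ (Fin n → ℂ)

/-- `Q_j`: left multiplication by `ι(e_j)` on the exterior algebra. -/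
def Qop (n : ℕ) (j : Fin n) : Module.End ℂ (ExtC n) :=
  LinearMap.mulLeft ℂ (ExteriorAlgebra.ι ℂ (Pi.single j 1))

/-- `P_j`: left contraction (interior product) by the `j`-th coordinate functional. -/
def Pop (n : ℕ) (j : Fin n) : Module.End ℂ (ExtC n) :=
  CliffordAlgebra.contractLeft (LinearMap.proj j : (Fin n → ℂ) →ₗ[ℂ] ℂ)

/-- The generators of the spin representation: `ω_{2j−1} = Q_j + P_j` and
`ω_{2j} = i (Q_j − P_j)`; here indices are zero-based, so `omegaOp i` with
`i.val` even is `ω_{2j-1}` for `j = i.val/2 + 1`. -/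
def omegaOp (n : ℕ) (i : Fin (2 * n)) : Module.End ℂ (ExtC n) :=
  if i.val % 2 = 0 then
    Qop n ⟨i.val / 2, by omega⟩ + Pop n ⟨i.val / 2, by omega⟩
  else
    Complex.I • (Qop n ⟨i.val / 2, by omega⟩ - Pop n ⟨i.val / 2, by omega⟩)

/-!
Pairing consecutive generators gives `ω_{2j-1} ω_{2j} = i [P_j, Q_j]`, so the product is
`i^n ∏_j T_j` with `T_j = [P_j, Q_j]`. From the canonical anticommutation relations, `T_j`
anticommutes with `Q_j` and commutes with `Q_k` for `k ≠ j`; hence `∏_j T_j` anticommutes with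
left multiplication by every `ι(e_k)` and fixes `1`. These two properties characterise the
grading involution, since `σ(a y) = σ(a) σ(y)` and `σ(ι v) = -ι v`.
-/

section RingLemmas

variable {A : Type*} [Ring A]

theorem lie_mul_eq_neg_mul_lie_of_mul_self_eq_zero {p q : A} (hq : q * q = 0)
    (hpq : p * q + q * p = 1) : ⁅p, q⁆ * q = -(q * ⁅p, q⁆) := by
  have hqpq : q * p * q = q := by
    rw [← add_sub_cancel_left (p * q) (q * p), hpq, sub_mul, one_mul, mul_assoc, hq, mul_zero,
      sub_zero]
  rw [Ring.lie_def, sub_mul, mul_sub, mul_assoc p, hq, mul_zero, zero_sub, hqpq, ← mul_assoc,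
    ← mul_assoc, hq, zero_mul, sub_zero, hqpq]

theorem commute_lie_of_anticommute {p q q' : A} (hqq' : q' * q = -(q * q'))
    (hpq : p * q = -(q * p)) : Commute ⁅p, q'⁆ q := by
  have hpq'q : p * q' * q = q * (p * q') := by
    rw [mul_assoc, hqq', mul_neg, ← mul_assoc, hpq, neg_mul, neg_neg, mul_assoc]
  have hq'pq : q' * p * q = q * (q' * p) := by
    rw [mul_assoc, hpq, mul_neg, ← mul_assoc, hqq', neg_mul, neg_neg, mul_assoc]
  rw [Commute, SemiconjBy, Ring.lie_def, sub_mul, hpq'q, hq'pq, mul_sub]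

theorem List.prod_ofFn_mul_eq_neg_one_pow_mul {m : ℕ} (g : Fin m → A) (e : Fin m → ℕ)
    (q : A) (h : ∀ j, g j * q = (-1) ^ e j * (q * g j)) :
    (List.ofFn g).prod * q = (-1) ^ (∑ j, e j) * (q * (List.ofFn g).prod) := by
  induction m with
  | zero => simp
  | succ m ih =>
    have hc : Commute ((-1 : A) ^ ∑ j : Fin m, e j.succ) (g 0) :=
      (Commute.neg_one_left _).pow_left _
    rw [List.ofFn_succ, List.prod_cons, Fin.sum_univ_succ, pow_add, mul_assoc,
      ih _ _ fun j => h j.succ, ← mul_assoc, ← hc.eq, mul_assoc, ← mul_assoc (g 0), h,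
      pow_mul_comm]
    simp only [mul_assoc]

end RingLemmas

theorem List.prod_ofFn_smul {M N : Type*} [CommMonoid M] [Monoid N] [MulAction M N]
    [IsScalarTower M N N] [SMulCommClass M N N] {m : ℕ} (c : M) (g : Fin m → N) :
    (List.ofFn fun j => c • g j).prod = c ^ m • (List.ofFn g).prod := by
  induction m with
  | zero => simp
  | succ m ih =>
    rw [List.ofFn_succ, List.prod_cons, ih, List.ofFn_succ, List.prod_cons, smul_mul_smul_comm,
      pow_succ']

theorem List.prod_ofFn_two_mul {M : Type*} [Monoid M] {m : ℕ} (f : Fin (2 * m) → M) :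
    (List.ofFn f).prod =
      (List.ofFn fun j : Fin m => f ⟨2 * j, by omega⟩ * f ⟨2 * j + 1, by omega⟩).prod := by
  rw [List.ofFn_mul', List.prod_flatten, List.map_ofFn]
  simp [Function.comp_def]

namespace CliffordAlgebra

variable {R M : Type*} [CommRing R] [AddCommGroup M] [Module R M] {Q : QuadraticForm R M}

theorem eq_involute_of_map_ι_mul {s : Set M} (hs : Submodule.span R s = ⊤)
    (L : CliffordAlgebra Q →ₗ[R] CliffordAlgebra Q) (h1 : L 1 = 1)
    (hι : ∀ v ∈ s, ∀ y, L (ι Q v * y) = -(ι Q v * L y)) :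
    L = involute.toLinearMap := by
  have hι' : ∀ v y, L (ι Q v * y) = -(ι Q v * L y) := by
    intro v y
    have hv : v ∈ Submodule.span R s := hs ▸ Submodule.mem_top
    induction hv using Submodule.span_induction with
    | mem v hv => exact hι v hv y
    | zero => simp
    | add v w _ _ hv hw => simp only [map_add, add_mul, hv, hw, neg_add]
    | smul r v _ hv => simp only [map_smul, smul_mul_assoc, hv, smul_neg]
  have hmul : ∀ a y, L (a * y) = involute a * L y := by
    intro a
    induction a using CliffordAlgebra.induction with
    | algebraMap r => simp [Algebra.algebraMap_eq_smul_one]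
    | ι v => simp [hι']
    | mul a b ha hb => simp [mul_assoc, ha, hb]
    | add a b ha hb => simp [add_mul, ha, hb]
  ext a
  simpa [h1] using hmul a 1

end CliffordAlgebra

section SpinRepresentation

variable {n}

theorem Qop_mul_self (j : Fin n) : Qop n j * Qop n j = 0 := by
  ext x
  simp [Qop, ← mul_assoc]

theorem Pop_mul_self (j : Fin n) : Pop n j * Pop n j = 0 := by
  ext x
  simp [Pop, CliffordAlgebra.contractLeft_contractLeft]

theorem Qop_mul_Qop (j k : Fin n) : Qop n j * Qop n k = -(Qop n k * Qop n j) := by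
  ext x
  simp [Qop, ← mul_assoc, eq_neg_iff_add_eq_zero, ← add_mul, ExteriorAlgebra.ι_add_mul_swap]

theorem Pop_mul_Qop_add (j k : Fin n) :
    Pop n j * Qop n k + Qop n k * Pop n j = if j = k then 1 else 0 := by
  refine LinearMap.ext fun x => ?_
  split_ifs with h <;> simp [Pop, Qop, CliffordAlgebra.contractLeft_ι_mul, h]

/-- `T_j = [P_j, Q_j]`, which acts on `Λ(ℂ^n)` by `-1` on monomials containing `e_j`
and by `1` on the others. -/
def parityOp (n : ℕ) (j : Fin n) : Module.End ℂ (ExtC n) :=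
  ⁅Pop n j, Qop n j⁆

theorem parityOp_mul_Qop_self (j : Fin n) :
    parityOp n j * Qop n j = -(Qop n j * parityOp n j) :=
  lie_mul_eq_neg_mul_lie_of_mul_self_eq_zero (Qop_mul_self j) (by simpa using Pop_mul_Qop_add j j)

theorem parityOp_mul_Qop_of_ne {j k : Fin n} (hjk : j ≠ k) :
    parityOp n j * Qop n k = Qop n k * parityOp n j :=
  (commute_lie_of_anticommute (Qop_mul_Qop j k)
    (eq_neg_of_add_eq_zero_left (by simpa [hjk] using Pop_mul_Qop_add j k))).eq

theorem parityOp_apply_one (j : Fin n) : parityOp n j 1 = 1 := by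
  simp [parityOp, Ring.lie_def, Pop, Qop]

theorem prod_parityOp_mul_Qop (k : Fin n) :
    (List.ofFn (parityOp n)).prod * Qop n k = -(Qop n k * (List.ofFn (parityOp n)).prod) := by
  -- `rw`/`simp` cannot use `neg_one_mul` here: on `Module.End ℂ (ExtC n)` the ring negation and
  -- `LinearMap.instNeg` agree only after unfolding instances, so it is applied in term mode.
  have hsign (j : Fin n) : parityOp n j * Qop n k =
      (-1) ^ Pi.single (M := fun _ => ℕ) k 1 j * (Qop n k * parityOp n j) := by
    rcases eq_or_ne j k with rfl | hjk
    · rw [Pi.single_eq_same, pow_one]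
      exact (parityOp_mul_Qop_self j).trans (neg_one_mul (Qop n j * parityOp n j)).symm
    · rw [Pi.single_eq_of_ne hjk, pow_zero, one_mul]
      exact parityOp_mul_Qop_of_ne hjk
  have := List.prod_ofFn_mul_eq_neg_one_pow_mul _ _ (Qop n k) hsign
  rw [Finset.sum_pi_single', if_pos (Finset.mem_univ k), pow_one] at this
  exact this.trans (neg_one_mul (Qop n k * (List.ofFn (parityOp n)).prod))

theorem prod_parityOp_eq_involute :
    (List.ofFn (parityOp n)).prod =
      (CliffordAlgebra.involute (Q := (0 : QuadraticForm ℂ (Fin n → ℂ)))).toLinearMap := by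
  refine CliffordAlgebra.eq_involute_of_map_ι_mul (Pi.basisFun ℂ (Fin n)).span_eq _ ?_ ?_
  · refine MulAction.mem_stabilizerSubmonoid_iff.mp <| Submonoid.list_prod_mem
      (MulAction.stabilizerSubmonoid (Module.End ℂ (ExtC n)) (1 : ExtC n)) ?_
    simpa [List.forall_mem_ofFn_iff] using parityOp_apply_one
  · rintro _ ⟨k, rfl⟩ y
    simpa [Qop] using congr($(prod_parityOp_mul_Qop k) y)

theorem omegaOp_mul_omegaOp (j : Fin n) :
    omegaOp n ⟨2 * j, by omega⟩ * omegaOp n ⟨2 * j + 1, by omega⟩ =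
      Complex.I • parityOp n j := by
  have h_even : (2 * j.val) % 2 = 0 := by omega
  have h_odd : (2 * j.val + 1) % 2 = 1 := by omega
  have h_idx (i : ℕ) (hi : i / 2 = j) (h : i / 2 < n) : (⟨i / 2, h⟩ : Fin n) = j := Fin.ext hi
  simp only [omegaOp, h_even, h_odd, if_true, one_ne_zero, if_false,
    h_idx (2 * j) (by omega), h_idx (2 * j + 1) (by omega), mul_smul_comm]
  congr 1
  rw [add_mul, mul_sub, mul_sub, Qop_mul_self, Pop_mul_self, parityOp, Ring.lie_def]
  abel

end SpinRepresentation

/-- In the spin representation of the even Clifford algebra on `Λ(ℂ^n)`, the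
composite `ω_1 ∘ ω_2 ∘ ⋯ ∘ ω_{2n}` equals `i^n` times the grading involution. -/
theorem spin_rep_product_eq_parity (n : ℕ) :
    (List.ofFn fun i : Fin (2 * n) => omegaOp n i).prod =
      Complex.I ^ n •
        (CliffordAlgebra.involute (Q := (0 : QuadraticForm ℂ (Fin n → ℂ)))).toLinearMap := by
  rw [List.prod_ofFn_two_mul, funext omegaOp_mul_omegaOp, List.prod_ofFn_smul,
    prod_parityOp_eq_involute]
end
end

section
/- Periodicity Lemma for Clifford–Weyl algebras: for all m, n, k ∈ ℕ there is an isomorphism of ℂ-algebras C(2m+n, 2k) ≅ C(2m) ⊗[ℂ] C(n, 2k), where ⊗[ℂ] is the (ungraded) tensor product of ℂ-algebras. -/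
/-!
The chirality element `Γ = i^m e₁ ⋯ e_{2m}` of `C(2m)` squares to `1` and anticommutes with
every `e_a`. Hence `e_a ⊗ 1` together with `Γ ⊗ ω_j`, `Γ ⊗ p_j`, `Γ ⊗ q_j` satisfy the relations
of `C(2m+n, 2k)`. Conversely, if `Γ'` is the chirality element of the first `2m` generators
`ω_a` of `C(2m+n, 2k)`, then the `ω_a` and the elements `Γ' ω_{2m+j}`, `Γ' p_j`, `Γ' q_j` generate
commuting copies of `C(2m)` and `C(n, 2k)`. The two homomorphisms so obtained are mutually
inverse on generators.
-/

open scoped TensorProduct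

/-- Generators of the Clifford–Weyl algebra `C(n, 2k)`:
`n` Fermi-type generators `ω_i` and `2k` Bose-type generators `p_i, q_i`. -/
inductive CWGen (n k : ℕ) : Type
  | w : Fin n → CWGen n k
  | p : Fin k → CWGen n k
  | q : Fin k → CWGen n k

/-- The defining relations of the Clifford–Weyl algebra `C(n, 2k)`:
`ω_i ω_j + ω_j ω_i = 2δ_{ij}`, `p_i q_j − q_j p_i = δ_{ij}`, `p_i p_j = p_j p_i`,
`q_i q_j = q_j q_i`, `ω_i p_j = −p_j ω_i`, `ω_i q_j = −q_j ω_i`. -/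
inductive CWRel (n k : ℕ) :
    FreeAlgebra ℂ (CWGen n k) → FreeAlgebra ℂ (CWGen n k) → Prop
  | ww (i j : Fin n) : CWRel n k
      (FreeAlgebra.ι ℂ (CWGen.w i) * FreeAlgebra.ι ℂ (CWGen.w j) +
        FreeAlgebra.ι ℂ (CWGen.w j) * FreeAlgebra.ι ℂ (CWGen.w i))
      (if i = j then 2 else 0)
  | pq (i j : Fin k) : CWRel n k
      (FreeAlgebra.ι ℂ (CWGen.p i) * FreeAlgebra.ι ℂ (CWGen.q j) -
        FreeAlgebra.ι ℂ (CWGen.q j) * FreeAlgebra.ι ℂ (CWGen.p i))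
      (if i = j then 1 else 0)
  | pp (i j : Fin k) : CWRel n k
      (FreeAlgebra.ι ℂ (CWGen.p i) * FreeAlgebra.ι ℂ (CWGen.p j))
      (FreeAlgebra.ι ℂ (CWGen.p j) * FreeAlgebra.ι ℂ (CWGen.p i))
  | qq (i j : Fin k) : CWRel n k
      (FreeAlgebra.ι ℂ (CWGen.q i) * FreeAlgebra.ι ℂ (CWGen.q j))
      (FreeAlgebra.ι ℂ (CWGen.q j) * FreeAlgebra.ι ℂ (CWGen.q i))
  | wp (i : Fin n) (j : Fin k) : CWRel n k
      (FreeAlgebra.ι ℂ (CWGen.w i) * FreeAlgebra.ι ℂ (CWGen.p j))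
      (-(FreeAlgebra.ι ℂ (CWGen.p j) * FreeAlgebra.ι ℂ (CWGen.w i)))
  | wq (i : Fin n) (j : Fin k) : CWRel n k
      (FreeAlgebra.ι ℂ (CWGen.w i) * FreeAlgebra.ι ℂ (CWGen.q j))
      (-(FreeAlgebra.ι ℂ (CWGen.q j) * FreeAlgebra.ι ℂ (CWGen.w i)))

/-- The Clifford–Weyl algebra `C(n, 2k)`, presented by generators and relations. -/
abbrev CliffordWeyl (n k : ℕ) : Type := RingQuot (CWRel n k)

section Signs

variable {R A : Type*} [CommMonoid R] [Monoid A] [MulAction R A] [IsScalarTower R A A]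
  [SMulCommClass R A A]

theorem mul_ofFn_prod_of_mul_eq_smul {r : ℕ} (x : Fin r → A) (y : A) (s : Fin r → R)
    (h : ∀ j, y * x j = s j • (x j * y)) :
    y * (List.ofFn x).prod = (∏ j, s j) • ((List.ofFn x).prod * y) := by
  induction r with
  | zero => simp
  | succ r ih =>
    rw [List.ofFn_succ, List.prod_cons, ← mul_assoc, h 0, smul_mul_assoc, mul_assoc,
      ih (fun j => x j.succ) (fun j => s j.succ) (fun j => h j.succ), Fin.prod_univ_succ,
      mul_smul, mul_smul_comm, mul_assoc]

end Signs

theorem commute_mul_of_anticomm_of_anticomm {A : Type*} [Ring A] {a b c : A}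
    (hab : a * b = -(b * a)) (hac : a * c = -(c * a)) :
    Commute a (b * c) := by
  rw [Commute, SemiconjBy, ← mul_assoc, hab, neg_mul, mul_assoc, hac, mul_neg, neg_neg, mul_assoc]

theorem AlgHom.commute_of_adjoin_eq_top {R A B C : Type*} [CommSemiring R] [Semiring A]
    [Semiring B] [Semiring C] [Algebra R A] [Algebra R B] [Algebra R C] {s : Set A} {t : Set B}
    (hs : Algebra.adjoin R s = ⊤) (ht : Algebra.adjoin R t = ⊤) (φ : A →ₐ[R] C) (ψ : B →ₐ[R] C)
    (h : ∀ a ∈ s, ∀ b ∈ t, Commute (φ a) (ψ b)) (x : A) (y : B) : Commute (φ x) (ψ y) := by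
  have hx : φ x ∈ Algebra.adjoin R (φ '' s) := by
    rw [← AlgHom.map_adjoin, hs]; exact ⟨x, trivial, rfl⟩
  have hy : ψ y ∈ Algebra.adjoin R (ψ '' t) := by
    rw [← AlgHom.map_adjoin, ht]; exact ⟨y, trivial, rfl⟩
  refine Algebra.commute_of_mem_adjoin_of_forall_mem_commute hy ?_
  rintro _ ⟨b, hb, rfl⟩
  refine (Algebra.commute_of_mem_adjoin_of_forall_mem_commute hx ?_).symm
  rintro _ ⟨a, ha, rfl⟩
  exact (h a ha b hb).symm

structure IsCliffordFamily {ι A : Type*} [Ring A] (x : ι → A) : Prop where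
  mul_self : ∀ i, x i * x i = 1
  anticomm : ∀ i j, i ≠ j → x i * x j = -(x j * x i)

namespace IsCliffordFamily

variable {ι A B : Type*} [Ring A] [Ring B] {x : ι → A}

theorem map {F : Type*} [FunLike F A B] [RingHomClass F A B] (hx : IsCliffordFamily x) (φ : F) :
    IsCliffordFamily (φ ∘ x) where
  mul_self i := by simp [← map_mul, hx.mul_self]
  anticomm i j hij := by simp [← map_mul, hx.anticomm i j hij]

theorem comp (hx : IsCliffordFamily x) {κ : Type*} {f : κ → ι} (hf : f.Injective) :
    IsCliffordFamily (x ∘ f) where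
  mul_self i := hx.mul_self (f i)
  anticomm _ _ hij := hx.anticomm _ _ (hf.ne hij)

theorem anticommutator_eq [DecidableEq ι] (hx : IsCliffordFamily x) (i j : ι) :
    x i * x j + x j * x i = if i = j then 2 else 0 := by
  split_ifs with hij
  · rw [hij, hx.mul_self, one_add_one_eq_two]
  · rw [hx.anticomm i j hij, neg_add_cancel]

theorem of_anticommutator [DecidableEq ι] {K : Type*} [Field K] [NeZero (2 : K)] [Algebra K A]
    (h : ∀ i j, x i * x j + x j * x i = if i = j then 2 else 0) : IsCliffordFamily x where
  mul_self i := by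
    have h2 : (2 : K) • (x i * x i) = (2 : K) • 1 := by
      rw [two_smul, two_smul, h i i, if_pos rfl, one_add_one_eq_two]
    exact smul_right_injective A two_ne_zero h2
  anticomm i j hij := eq_neg_of_add_eq_zero_left (by rw [h i j, if_neg hij])

theorem append {r s : ℕ} {x : Fin r → A} {y : Fin s → A} (hx : IsCliffordFamily x)
    (hy : IsCliffordFamily y) (hxy : ∀ i j, x i * y j = -(y j * x i)) :
    IsCliffordFamily (Fin.append x y) where
  mul_self i := by
    induction i using Fin.addCases <;> simp [hx.mul_self, hy.mul_self]
  anticomm i j hij := by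
    induction i using Fin.addCases <;> induction j using Fin.addCases <;>
      simp_all [hx.anticomm, hy.anticomm]

theorem ofFn_prod_mul_self {r : ℕ} {x : Fin r → A} (hx : IsCliffordFamily x) :
    (List.ofFn x).prod * (List.ofFn x).prod = (-1 : ℤ) ^ r.choose 2 • (1 : A) := by
  induction r with
  | zero => simp
  | succ r ih =>
    set P := (List.ofFn fun i => x i.succ).prod
    have hP : P * x 0 = (-1 : ℤ) ^ r • (x 0 * P) := by
      have := mul_ofFn_prod_of_mul_eq_smul (fun i => x i.succ) (x 0) (fun _ => (-1 : ℤ))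
        fun j => by rw [hx.anticomm _ _ (Fin.succ_ne_zero j).symm, neg_one_smul]
      rw [this, Finset.prod_const, Finset.card_univ, Fintype.card_fin, smul_smul, ← pow_add,
        Even.neg_one_pow ⟨r, rfl⟩, one_smul]
    have ihP : P * P = _ := ih (hx.comp (Fin.succ_injective r))
    rw [List.ofFn_succ, List.prod_cons]
    calc x 0 * P * (x 0 * P) = (-1 : ℤ) ^ r • (x 0 * x 0 * (P * P)) := by
          rw [mul_assoc, ← mul_assoc P, hP, smul_mul_assoc, mul_smul_comm]; simp only [mul_assoc]
      _ = (-1 : ℤ) ^ (r + 1).choose 2 • (1 : A) := by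
          rw [hx.mul_self, one_mul, ihP, smul_smul, ← pow_add,
            Nat.choose_succ_succ', Nat.choose_one_right, add_comm]

theorem sum_smul_mul_self {K : Type*} [CommRing K] [Algebra K A] {r : ℕ} {x : Fin r → A}
    (hx : IsCliffordFamily x) (v : Fin r → K) :
    (∑ i, v i • x i) * (∑ i, v i • x i) = algebraMap K A (∑ i, v i * v i) := by
  induction r with
  | zero => simp
  | succ r ih =>
    have hcross : ∀ j : Fin r, (v 0 • x 0) * (v j.succ • x j.succ) +
        (v j.succ • x j.succ) * (v 0 • x 0) = 0 := fun j => by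
      rw [smul_mul_smul_comm, smul_mul_smul_comm, mul_comm (v j.succ),
        hx.anticomm _ _ (Fin.succ_ne_zero j).symm, smul_neg, neg_add_cancel]
    have htail := ih (x := fun j => x j.succ) (hx.comp (Fin.succ_injective r)) (fun j => v j.succ)
    simp only [Fin.sum_univ_succ, map_add]
    set a := v 0 • x 0
    set b := ∑ j : Fin r, v j.succ • x j.succ
    have hab : a * b + b * a = 0 := by
      simp only [b, Finset.mul_sum, Finset.sum_mul, ← Finset.sum_add_distrib]
      exact Finset.sum_eq_zero fun j _ => hcross j
    calc (a + b) * (a + b) = a * a + (a * b + b * a) + b * b := by noncomm_ring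
      _ = _ := by
        rw [hab, add_zero, htail, smul_mul_smul_comm, hx.mul_self, ← Algebra.algebraMap_eq_smul_one]

end IsCliffordFamily

section Chirality

variable {A B : Type*} [Ring A] [Algebra ℂ A] [Ring B] [Algebra ℂ B] {m : ℕ}

-- The factor `I ^ m` normalises the square of the product to `1`.
noncomputable def chirality (x : Fin (2 * m) → A) : A :=
  Complex.I ^ m • (List.ofFn x).prod

theorem map_chirality (φ : A →ₐ[ℂ] B) (x : Fin (2 * m) → A) :
    φ (chirality x) = chirality (φ ∘ x) := by
  rw [chirality, chirality, map_smul, map_list_prod, List.map_ofFn]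

theorem even_two_mul_choose_two_add (m : ℕ) : Even ((2 * m).choose 2 + m) := by
  rw [Nat.choose_two_right, mul_assoc, Nat.mul_div_cancel_left _ two_pos]
  exact ⟨m * m, by cases m <;> simp [mul_add, add_mul]; ring⟩

theorem IsCliffordFamily.chirality_mul_self {x : Fin (2 * m) → A} (hx : IsCliffordFamily x) :
    chirality x * chirality x = 1 := by
  rw [chirality, smul_mul_smul_comm, hx.ofFn_prod_mul_self, ← Int.cast_smul_eq_zsmul ℂ,
    smul_smul, ← mul_pow, Complex.I_mul_I]
  push_cast
  rw [← pow_add, add_comm, (even_two_mul_choose_two_add m).neg_one_pow, one_smul]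

theorem commute_chirality_of_anticomm (x : Fin (2 * m) → A) {y : A}
    (h : ∀ i, x i * y = -(y * x i)) : Commute (chirality x) y := by
  have := mul_ofFn_prod_of_mul_eq_smul x y (fun _ => (-1 : ℤ)) fun i => by
    rw [h, neg_one_smul, neg_neg]
  rw [Finset.prod_const, Finset.card_univ, Fintype.card_fin, Even.neg_one_pow ⟨m, two_mul m⟩,
    one_smul] at this
  rw [Commute, SemiconjBy, chirality, mul_smul_comm, smul_mul_assoc, this]

theorem IsCliffordFamily.mul_chirality {x : Fin (2 * m) → A} (hx : IsCliffordFamily x)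
    (i : Fin (2 * m)) : x i * chirality x = -(chirality x * x i) := by
  have := mul_ofFn_prod_of_mul_eq_smul x (x i) (fun j => if j = i then (1 : ℤ) else -1)
    fun j => by
      split_ifs with hji
      · rw [hji, one_smul]
      · rw [hx.anticomm _ _ (Ne.symm hji), neg_one_smul]
  have hsign : ∏ j, (if j = i then (1 : ℤ) else -1) = -1 := by
    have : Odd (2 * m - 1) := ⟨m - 1, by have := i.pos; omega⟩
    simp [Finset.prod_ite, Finset.filter_ne', this.neg_one_pow]
  rw [hsign, neg_one_smul] at this
  rw [chirality, mul_smul_comm, smul_mul_assoc, this, smul_neg]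

end Chirality

namespace CliffordC

variable {r : ℕ} {A : Type*} [Ring A] [Algebra ℂ A]

noncomputable def e (i : Fin r) : CliffordC r :=
  CliffordAlgebra.ι (Qf r) (Pi.single i 1)

theorem Qf_apply (v : Fin r → ℂ) : Qf r v = ∑ i, v i * v i := by
  simp [Qf, QuadraticMap.weightedSumSquares_apply]

theorem isCliffordFamily_e : IsCliffordFamily (e : Fin r → CliffordC r) where
  mul_self i := by
    rw [e, CliffordAlgebra.ι_sq_scalar, Qf_apply]
    simp [Pi.single_apply]
  anticomm i j hij := by
    refine CliffordAlgebra.ι_mul_ι_comm_of_isOrtho ?_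
    rw [QuadraticMap.isOrtho_def, Qf_apply, Qf_apply, Qf_apply, ← Finset.sum_add_distrib]
    refine Finset.sum_congr rfl fun l _ => ?_
    by_cases hli : l = i <;> by_cases hlj : l = j <;> simp_all

noncomputable def lift (x : Fin r → A) (hx : IsCliffordFamily x) : CliffordC r →ₐ[ℂ] A :=
  CliffordAlgebra.lift (Qf r) ⟨Fintype.linearCombination ℂ x, fun v => by
    rw [Fintype.linearCombination_apply, hx.sum_smul_mul_self, Qf_apply]⟩

@[simp]
theorem lift_e (x : Fin r → A) (hx : IsCliffordFamily x) (i : Fin r) : lift x hx (e i) = x i := by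
  simp [lift, e]

theorem lift_ι (x : Fin r → A) (hx : IsCliffordFamily x) (v : Fin r → ℂ) :
    lift x hx (CliffordAlgebra.ι (Qf r) v) = ∑ i, v i • x i := by
  simp [lift, Fintype.linearCombination_apply]

theorem algHom_ext {φ ψ : CliffordC r →ₐ[ℂ] A} (h : ∀ i, φ (e i) = ψ (e i)) : φ = ψ := by
  refine CliffordAlgebra.hom_ext (LinearMap.pi_ext fun i c => ?_)
  have hc : (Pi.single i c : Fin r → ℂ) = c • Pi.single i 1 := by
    rw [← Pi.single_smul, smul_eq_mul, mul_one]
  simp only [LinearMap.comp_apply, AlgHom.toLinearMap_apply, hc, map_smul]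
  exact congrArg (c • ·) (h i)

end CliffordC

structure IsCliffordWeylFamily {n k : ℕ} {A : Type*} [Ring A] (f : CWGen n k → A) : Prop where
  clifford : IsCliffordFamily (f ∘ CWGen.w)
  pq : ∀ i j, f (.p i) * f (.q j) - f (.q j) * f (.p i) = if i = j then 1 else 0
  pp : ∀ i j, Commute (f (.p i)) (f (.p j))
  qq : ∀ i j, Commute (f (.q i)) (f (.q j))
  wp : ∀ i j, f (.w i) * f (.p j) = -(f (.p j) * f (.w i))
  wq : ∀ i j, f (.w i) * f (.q j) = -(f (.q j) * f (.w i))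

def CWGen.natAdd {n k : ℕ} (r : ℕ) : CWGen n k → CWGen (r + n) k
  | .w i => .w (Fin.natAdd r i)
  | .p j => .p j
  | .q j => .q j

def CWGen.prependClifford {r n k : ℕ} {A : Type*} (x : Fin r → A) (f : CWGen n k → A) :
    CWGen (r + n) k → A
  | .w i => Fin.append x (f ∘ .w) i
  | .p j => f (.p j)
  | .q j => f (.q j)

namespace CWGen

variable {r n k : ℕ} {A : Type*} (x : Fin r → A) (f : CWGen n k → A)

@[simp]
theorem prependClifford_castAdd (a : Fin r) : prependClifford x f (.w (Fin.castAdd n a)) = x a := by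
  simp [prependClifford]

@[simp]
theorem prependClifford_natAdd (i : Fin n) :
    prependClifford x f (.w (Fin.natAdd r i)) = f (.w i) := by
  simp [prependClifford]

@[simp]
theorem prependClifford_p (j : Fin k) : prependClifford x f (.p j) = f (.p j) := rfl

@[simp]
theorem prependClifford_q (j : Fin k) : prependClifford x f (.q j) = f (.q j) := rfl

end CWGen

namespace IsCliffordWeylFamily

variable {n k : ℕ} {A B : Type*} [Ring A] [Ring B] {f : CWGen n k → A}

theorem map {F : Type*} [FunLike F A B] [RingHomClass F A B] (hf : IsCliffordWeylFamily f)
    (φ : F) : IsCliffordWeylFamily (φ ∘ f) where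
  clifford := hf.clifford.map φ
  pq i j := by simp [← map_mul, ← map_sub, hf.pq i j, apply_ite φ]
  pp i j := (hf.pp i j).map φ
  qq i j := (hf.qq i j).map φ
  wp i j := by simp [← map_mul, hf.wp i j]
  wq i j := by simp [← map_mul, hf.wq i j]

-- All defining relations are quadratic and `(γ * a) * (γ * b) = a * b`.
theorem twist (hf : IsCliffordWeylFamily f) {γ : A} (hγ : γ * γ = 1) (hγf : ∀ g, Commute γ (f g)) :
    IsCliffordWeylFamily (fun g => γ * f g) := by
  have key : ∀ g h, γ * f g * (γ * f h) = f g * f h := fun g h => by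
    rw [mul_assoc, ← mul_assoc (f g), ← (hγf g).eq, mul_assoc, ← mul_assoc γ, hγ, one_mul]
  refine ⟨⟨fun i => ?_, fun i j hij => ?_⟩, fun i j => ?_, fun i j => ?_, fun i j => ?_,
    fun i j => ?_, fun i j => ?_⟩ <;>
    simp only [Commute, SemiconjBy, Function.comp_apply, key]
  · exact hf.clifford.mul_self i
  · exact hf.clifford.anticomm i j hij
  · exact hf.pq i j
  · exact hf.pp i j
  · exact hf.qq i j
  · exact hf.wp i j
  · exact hf.wq i j

theorem comp_natAdd {r : ℕ} {f : CWGen (r + n) k → A} (hf : IsCliffordWeylFamily f) :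
    IsCliffordWeylFamily (f ∘ CWGen.natAdd r) where
  clifford := hf.clifford.comp (Fin.natAdd_injective n r)
  pq := hf.pq
  pp := hf.pp
  qq := hf.qq
  wp i := hf.wp (Fin.natAdd r i)
  wq i := hf.wq (Fin.natAdd r i)

theorem anticomm_castAdd {r : ℕ} {f : CWGen (r + n) k → A} (hf : IsCliffordWeylFamily f)
    (a : Fin r) (g : CWGen n k) :
    f (.w (Fin.castAdd n a)) * f (g.natAdd r) = -(f (g.natAdd r) * f (.w (Fin.castAdd n a))) := by
  cases g with
  | w i => exact hf.clifford.anticomm _ _ (by simp [Fin.ext_iff]; omega)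
  | p j => exact hf.wp _ j
  | q j => exact hf.wq _ j

theorem prependClifford {r : ℕ} {x : Fin r → A} (hx : IsCliffordFamily x)
    (hf : IsCliffordWeylFamily f) (hxf : ∀ a g, x a * f g = -(f g * x a)) :
    IsCliffordWeylFamily (CWGen.prependClifford x f) where
  clifford := hx.append hf.clifford fun a i => hxf a (.w i)
  pq := hf.pq
  pp := hf.pp
  qq := hf.qq
  wp i j := by
    induction i using Fin.addCases with
    | left a => simpa using hxf a (.p j)
    | right i => simpa using hf.wp i j
  wq i j := by
    induction i using Fin.addCases with
    | left a => simpa using hxf a (.q j)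
    | right i => simpa using hf.wq i j

end IsCliffordWeylFamily

namespace CliffordWeyl

variable {n k : ℕ} {A : Type*} [Ring A] [Algebra ℂ A]

def ι (g : CWGen n k) : CliffordWeyl n k :=
  RingQuot.mkAlgHom ℂ (CWRel n k) (FreeAlgebra.ι ℂ g)

theorem isCliffordWeylFamily_ι : IsCliffordWeylFamily (ι : CWGen n k → CliffordWeyl n k) := by
  have rel {x y} (h : CWRel n k x y) := RingQuot.mkAlgHom_rel ℂ h
  refine ⟨.of_anticommutator (K := ℂ) fun i j => ?_, fun i j => ?_, fun i j => ?_, fun i j => ?_,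
    fun i j => ?_, fun i j => ?_⟩
  · simpa [ι, apply_ite (RingQuot.mkAlgHom ℂ (CWRel n k)), map_ofNat] using rel (.ww i j)
  · simpa [ι, apply_ite (RingQuot.mkAlgHom ℂ (CWRel n k))] using rel (.pq i j)
  · simpa [ι, Commute, SemiconjBy] using rel (.pp i j)
  · simpa [ι, Commute, SemiconjBy] using rel (.qq i j)
  · simpa [ι] using rel (.wp i j)
  · simpa [ι] using rel (.wq i j)

noncomputable def lift (f : CWGen n k → A) (hf : IsCliffordWeylFamily f) :
    CliffordWeyl n k →ₐ[ℂ] A :=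
  RingQuot.liftAlgHom ℂ ⟨FreeAlgebra.lift ℂ f, fun _ _ h => by
    cases h with
    | ww i j =>
      simpa [apply_ite (FreeAlgebra.lift ℂ f), map_ofNat] using hf.clifford.anticommutator_eq i j
    | pq i j => simpa [apply_ite (FreeAlgebra.lift ℂ f)] using hf.pq i j
    | pp i j => simpa using (hf.pp i j).eq
    | qq i j => simpa using (hf.qq i j).eq
    | wp i j => simpa using hf.wp i j
    | wq i j => simpa using hf.wq i j⟩

@[simp]
theorem lift_ι (f : CWGen n k → A) (hf : IsCliffordWeylFamily f) (g : CWGen n k) :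
    lift f hf (ι g) = f g := by
  simp [lift, ι]

theorem algHom_ext {φ ψ : CliffordWeyl n k →ₐ[ℂ] A} (h : ∀ g, φ (ι g) = ψ (ι g)) : φ = ψ :=
  RingQuot.ringQuot_ext' _ _ _ (FreeAlgebra.hom_ext (funext h))

theorem adjoin_range_ι : Algebra.adjoin ℂ (Set.range (ι : CWGen n k → CliffordWeyl n k)) = ⊤ := by
  rw [show Set.range (ι : CWGen n k → CliffordWeyl n k) =
    RingQuot.mkAlgHom ℂ (CWRel n k) '' Set.range (FreeAlgebra.ι ℂ) from Set.range_comp _ _,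
    Algebra.adjoin_image, FreeAlgebra.adjoin_range_ι, Algebra.map_top, AlgHom.range_eq_top]
  exact RingQuot.mkAlgHom_surjective ℂ _

end CliffordWeyl

namespace CliffordWeyl

open Algebra.TensorProduct (includeLeft includeRight includeRight_apply tmul_mul_tmul)

variable (m n k : ℕ)

noncomputable def toTensorGen : CWGen (2 * m + n) k → CliffordC (2 * m) ⊗[ℂ] CliffordWeyl n k :=
  CWGen.prependClifford (fun a => CliffordC.e a ⊗ₜ 1) fun g => chirality CliffordC.e ⊗ₜ ι g

theorem isCliffordWeylFamily_toTensorGen : IsCliffordWeylFamily (toTensorGen m n k) := by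
  have he := CliffordC.isCliffordFamily_e (r := 2 * m)
  have hLR : ∀ a b, Commute (a ⊗ₜ[ℂ] (1 : CliffordWeyl n k)) ((1 : CliffordC (2 * m)) ⊗ₜ[ℂ] b) :=
    fun a b => (Commute.one_right a).tmul (Commute.one_left b)
  have hΓ : chirality (CliffordC.e (r := 2 * m)) ⊗ₜ[ℂ] (1 : CliffordWeyl n k) *
      chirality CliffordC.e ⊗ₜ 1 = 1 := by
    rw [tmul_mul_tmul, he.chirality_mul_self, one_mul, Algebra.TensorProduct.one_def]
  have hright :=
    (isCliffordWeylFamily_ι.map (includeRight (A := CliffordC (2 * m)))).twist hΓ fun g => hLR _ _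
  simp only [Function.comp_apply, includeRight_apply, tmul_mul_tmul, mul_one, one_mul] at hright
  refine .prependClifford (he.map (includeLeft (S := ℂ) (B := CliffordWeyl n k))) hright
    fun a g => ?_
  rw [tmul_mul_tmul, tmul_mul_tmul, he.mul_chirality, one_mul, mul_one, TensorProduct.neg_tmul]

noncomputable def toTensor :
    CliffordWeyl (2 * m + n) k →ₐ[ℂ] CliffordC (2 * m) ⊗[ℂ] CliffordWeyl n k :=
  lift (toTensorGen m n k) (isCliffordWeylFamily_toTensorGen m n k)

def leadingGen (a : Fin (2 * m)) : CliffordWeyl (2 * m + n) k :=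
  ι (.w (Fin.castAdd n a))

theorem isCliffordFamily_leadingGen : IsCliffordFamily (leadingGen m n k) :=
  isCliffordWeylFamily_ι.clifford.comp (Fin.castAdd_injective _ _)

theorem commute_chirality_leadingGen (g : CWGen n k) :
    Commute (chirality (leadingGen m n k)) (ι (g.natAdd (2 * m))) :=
  commute_chirality_of_anticomm _ fun a => isCliffordWeylFamily_ι.anticomm_castAdd a g

noncomputable def ofTensorRight : CliffordWeyl n k →ₐ[ℂ] CliffordWeyl (2 * m + n) k :=
  lift (fun g => chirality (leadingGen m n k) * ι (g.natAdd (2 * m)))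
    (isCliffordWeylFamily_ι.comp_natAdd.twist
      (isCliffordFamily_leadingGen m n k).chirality_mul_self (commute_chirality_leadingGen m n k))

noncomputable def ofTensorLeft : CliffordC (2 * m) →ₐ[ℂ] CliffordWeyl (2 * m + n) k :=
  CliffordC.lift (leadingGen m n k) (isCliffordFamily_leadingGen m n k)

theorem commute_ofTensorLeft_ofTensorRight (x : CliffordC (2 * m)) (y : CliffordWeyl n k) :
    Commute (ofTensorLeft m n k x) (ofTensorRight m n k y) := by
  refine AlgHom.commute_of_adjoin_eq_top CliffordAlgebra.adjoin_range_ι adjoin_range_ι _ _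
    ?_ x y
  rintro _ ⟨v, rfl⟩ _ ⟨g, rfl⟩
  rw [ofTensorLeft, CliffordC.lift_ι, ofTensorRight, lift_ι]
  exact .sum_left _ _ _ fun a _ => .smul_left (commute_mul_of_anticomm_of_anticomm
    ((isCliffordFamily_leadingGen m n k).mul_chirality a)
    (isCliffordWeylFamily_ι.anticomm_castAdd a g)) _

noncomputable def ofTensor :
    CliffordC (2 * m) ⊗[ℂ] CliffordWeyl n k →ₐ[ℂ] CliffordWeyl (2 * m + n) k :=
  Algebra.TensorProduct.lift (ofTensorLeft m n k) (ofTensorRight m n k)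
    (commute_ofTensorLeft_ofTensorRight m n k)

variable {m n k}

theorem toTensorGen_natAdd (g : CWGen n k) :
    toTensorGen m n k (g.natAdd (2 * m)) = chirality CliffordC.e ⊗ₜ ι g := by
  cases g <;> simp [toTensorGen, CWGen.natAdd]

theorem toTensor_leadingGen (a : Fin (2 * m)) :
    toTensor m n k (leadingGen m n k a) = CliffordC.e a ⊗ₜ 1 := by
  simp [toTensor, leadingGen, toTensorGen]

theorem toTensor_chirality_leadingGen :
    toTensor m n k (chirality (leadingGen m n k)) = chirality CliffordC.e ⊗ₜ 1 := by
  rw [map_chirality, Function.comp_def]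
  simp only [toTensor_leadingGen]
  exact (map_chirality (includeLeft (R := ℂ) (S := ℂ) (B := CliffordWeyl n k)) _).symm

theorem ofTensorLeft_chirality :
    ofTensorLeft m n k (chirality CliffordC.e) = chirality (leadingGen m n k) := by
  rw [map_chirality]
  congr 1
  funext a
  exact CliffordC.lift_e _ _ a

theorem ofTensor_toTensorGen (g : CWGen (2 * m + n) k) :
    ofTensor m n k (toTensorGen m n k g) = ι g := by
  have hright (g : CWGen n k) : ofTensor m n k (toTensorGen m n k (g.natAdd (2 * m))) =
      ι (g.natAdd (2 * m)) := by
    rw [toTensorGen_natAdd, ofTensor, Algebra.TensorProduct.lift_tmul, ofTensorLeft_chirality,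
      ofTensorRight, lift_ι, ← mul_assoc, (isCliffordFamily_leadingGen m n k).chirality_mul_self,
      one_mul]
  cases g with
  | w i =>
    induction i using Fin.addCases with
    | left a => simp [toTensorGen, ofTensor, ofTensorLeft, leadingGen]
    | right j => exact hright (.w j)
  | p j => exact hright (.p j)
  | q j => exact hright (.q j)

theorem ofTensor_comp_toTensor :
    (ofTensor m n k).comp (toTensor m n k) = AlgHom.id ℂ _ :=
  algHom_ext fun g => by simp [toTensor, ofTensor_toTensorGen]

theorem toTensor_comp_ofTensor :
    (toTensor m n k).comp (ofTensor m n k) = AlgHom.id ℂ _ := by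
  apply Algebra.TensorProduct.ext
  · refine CliffordC.algHom_ext fun a => ?_
    simp [ofTensor, ofTensorLeft, toTensor_leadingGen]
  · refine algHom_ext fun g => ?_
    simp only [AlgHom.comp_apply, AlgHom.restrictScalars_apply, includeRight_apply, ofTensor,
      Algebra.TensorProduct.lift_tmul, map_one, one_mul, ofTensorRight, lift_ι, map_mul,
      toTensor_chirality_leadingGen]
    rw [toTensor, lift_ι, toTensorGen_natAdd, tmul_mul_tmul,
      CliffordC.isCliffordFamily_e.chirality_mul_self, one_mul, AlgHom.id_apply]

end CliffordWeyl

/-- Periodicity Lemma for Clifford–Weyl algebras: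
`C(2m+n, 2k) ≅ C(2m) ⊗[ℂ] C(n, 2k)` as ℂ-algebras. -/
theorem cliffordWeyl_periodicity (m n k : ℕ) :
    Nonempty (CliffordWeyl (2 * m + n) k ≃ₐ[ℂ]
      (CliffordC (2 * m) ⊗[ℂ] CliffordWeyl n k)) :=
  ⟨.ofAlgHom _ _ CliffordWeyl.toTensor_comp_ofTensor CliffordWeyl.ofTensor_comp_toTensor⟩
end

section
/- For every λ ∈ ℂ with λ ≠ 0, there is an isomorphism of ℂ-algebras A_λ ≅ U_θ / ⟨θ² − λ²⟩, the quotient of U_θ by the two-sided ideal generated by θ² − λ². (This realizes A_λ as the primitive quotient B_{λ² − 1/16} of the enveloping algebra of osp(1,2), since U_θ is isomorphic to that enveloping algebra with Casimir element C = θ² − 1/16.) -/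
/-- Generators of the algebra `A_λ = A_λ(0)`: `P`, `E₊`, `E₋`. -/
inductive A0Gen : Type
  | P : A0Gen
  | Ep : A0Gen
  | Em : A0Gen

/-- The defining relations of `A_λ`: `P² = 1`, `P E₊ = −E₊ P`, `P E₋ = −E₋ P`,
and `E₊E₋ − E₋E₊ = −1/4 + λP`. -/
inductive A0Rel (lam : ℂ) : FreeAlgebra ℂ A0Gen → FreeAlgebra ℂ A0Gen → Prop
  | Psq : A0Rel lam (FreeAlgebra.ι ℂ A0Gen.P * FreeAlgebra.ι ℂ A0Gen.P) 1
  | PEp : A0Rel lam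
      (FreeAlgebra.ι ℂ A0Gen.P * FreeAlgebra.ι ℂ A0Gen.Ep)
      (-(FreeAlgebra.ι ℂ A0Gen.Ep * FreeAlgebra.ι ℂ A0Gen.P))
  | PEm : A0Rel lam
      (FreeAlgebra.ι ℂ A0Gen.P * FreeAlgebra.ι ℂ A0Gen.Em)
      (-(FreeAlgebra.ι ℂ A0Gen.Em * FreeAlgebra.ι ℂ A0Gen.P))
  | ghost : A0Rel lam
      (FreeAlgebra.ι ℂ A0Gen.Ep * FreeAlgebra.ι ℂ A0Gen.Em -
        FreeAlgebra.ι ℂ A0Gen.Em * FreeAlgebra.ι ℂ A0Gen.Ep)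
      (algebraMap ℂ (FreeAlgebra ℂ A0Gen) (-(1 / 4)) +
        lam • FreeAlgebra.ι ℂ A0Gen.P)

/-- The algebra `A_λ`, presented by generators and relations. -/
abbrev AZero (lam : ℂ) : Type := RingQuot (A0Rel lam)

/-- Generators of `U_θ`: `E₊`, `E₋`, `θ`. -/
inductive UGen : Type
  | Ep : UGen
  | Em : UGen
  | th : UGen

/-- The defining relations of `U_θ`: `E₊E₋ − E₋E₊ = −1/4 + θ`,
`θE₊ = −E₊θ`, `θE₋ = −E₋θ`. -/
inductive URel : FreeAlgebra ℂ UGen → FreeAlgebra ℂ UGen → Prop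
  | ghost : URel
      (FreeAlgebra.ι ℂ UGen.Ep * FreeAlgebra.ι ℂ UGen.Em -
        FreeAlgebra.ι ℂ UGen.Em * FreeAlgebra.ι ℂ UGen.Ep)
      (algebraMap ℂ (FreeAlgebra ℂ UGen) (-(1 / 4)) + FreeAlgebra.ι ℂ UGen.th)
  | thEp : URel
      (FreeAlgebra.ι ℂ UGen.th * FreeAlgebra.ι ℂ UGen.Ep)
      (-(FreeAlgebra.ι ℂ UGen.Ep * FreeAlgebra.ι ℂ UGen.th))
  | thEm : URel
      (FreeAlgebra.ι ℂ UGen.th * FreeAlgebra.ι ℂ UGen.Em)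
      (-(FreeAlgebra.ι ℂ UGen.Em * FreeAlgebra.ι ℂ UGen.th))

/-- The algebra `U_θ` (isomorphic to the enveloping algebra of `osp(1,2)`). -/
abbrev UTheta : Type := RingQuot URel

/-- The image of the generator `θ` in `U_θ`. -/
noncomputable def UTheta.theta : UTheta :=
  RingQuot.mkAlgHom ℂ URel (FreeAlgebra.ι ℂ UGen.th)

/-- The relation whose `RingQuot` is the quotient of `U_θ` by the two-sided ideal
generated by `θ² − λ²`. -/
inductive UThetaQuotRel (lam : ℂ) : UTheta → UTheta → Prop
  | rel : UThetaQuotRel lam (UTheta.theta ^ 2 - algebraMap ℂ UTheta (lam ^ 2)) 0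

/-!
The isomorphism sends `P ↦ λ⁻¹θ`, `E± ↦ E±`, with inverse `θ ↦ λP`, `E± ↦ E±`. The relation
`P² = 1` becomes `θ² = λ²`, which is exactly what the quotient imposes, and the commutator
relation `[E₊, E₋] = −1/4 + λP` becomes `[E₊, E₋] = −1/4 + θ`. Both composites fix the generators.
-/

noncomputable section

namespace AZero

variable {lam : ℂ}

def P : AZero lam := RingQuot.mkAlgHom ℂ (A0Rel lam) (FreeAlgebra.ι ℂ A0Gen.P)

def Ep : AZero lam := RingQuot.mkAlgHom ℂ (A0Rel lam) (FreeAlgebra.ι ℂ A0Gen.Ep)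

def Em : AZero lam := RingQuot.mkAlgHom ℂ (A0Rel lam) (FreeAlgebra.ι ℂ A0Gen.Em)

theorem P_mul_P : (P : AZero lam) * P = 1 := by
  simpa only [P, map_mul, map_one] using RingQuot.mkAlgHom_rel ℂ (A0Rel.Psq (lam := lam))

theorem P_mul_Ep : (P : AZero lam) * Ep = -(Ep * P) := by
  simpa only [P, Ep, map_mul, map_neg] using RingQuot.mkAlgHom_rel ℂ (A0Rel.PEp (lam := lam))

theorem P_mul_Em : (P : AZero lam) * Em = -(Em * P) := by
  simpa only [P, Em, map_mul, map_neg] using RingQuot.mkAlgHom_rel ℂ (A0Rel.PEm (lam := lam))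

theorem Ep_mul_Em_sub_Em_mul_Ep :
    (Ep : AZero lam) * Em - Em * Ep = algebraMap ℂ (AZero lam) (-(1 / 4)) + lam • P := by
  simpa only [P, Ep, Em, map_mul, map_sub, map_add, map_smul, AlgHom.commutes]
    using RingQuot.mkAlgHom_rel ℂ (A0Rel.ghost (lam := lam))

theorem algHom_ext {B : Type*} [Semiring B] [Algebra ℂ B] {φ ψ : AZero lam →ₐ[ℂ] B}
    (hP : φ P = ψ P) (hEp : φ Ep = ψ Ep) (hEm : φ Em = ψ Em) : φ = ψ := by
  refine RingQuot.ringQuot_ext' _ _ _ (FreeAlgebra.hom_ext (funext fun g => ?_))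
  cases g
  exacts [hP, hEp, hEm]

variable {B : Type*} [Ring B] [Algebra ℂ B]

def lift (p e f : B) (hpp : p * p = 1) (hpe : p * e = -(e * p)) (hpf : p * f = -(f * p))
    (hef : e * f - f * e = algebraMap ℂ B (-(1 / 4)) + lam • p) : AZero lam →ₐ[ℂ] B :=
  RingQuot.liftAlgHom ℂ ⟨FreeAlgebra.lift ℂ (A0Gen.rec p e f), by
    rintro _ _ ⟨⟩ <;>
      simp only [map_mul, map_one, map_neg, map_sub, map_add, map_smul, AlgHom.commutes,
        FreeAlgebra.lift_ι_apply] <;>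
      simp only [hpp, hpe, hpf, hef, map_neg]⟩

variable (p e f : B) (hpp : p * p = 1) (hpe : p * e = -(e * p)) (hpf : p * f = -(f * p))
  (hef : e * f - f * e = algebraMap ℂ B (-(1 / 4)) + lam • p)

@[simp]
theorem lift_P : lift p e f hpp hpe hpf hef P = p := by
  simp [lift, P]

@[simp]
theorem lift_Ep : lift p e f hpp hpe hpf hef Ep = e := by
  simp [lift, Ep]

@[simp]
theorem lift_Em : lift p e f hpp hpe hpf hef Em = f := by
  simp [lift, Em]

end AZero

namespace UTheta

def Ep : UTheta := RingQuot.mkAlgHom ℂ URel (FreeAlgebra.ι ℂ UGen.Ep)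

def Em : UTheta := RingQuot.mkAlgHom ℂ URel (FreeAlgebra.ι ℂ UGen.Em)

theorem Ep_mul_Em_sub_Em_mul_Ep :
    Ep * Em - Em * Ep = algebraMap ℂ UTheta (-(1 / 4)) + theta := by
  simpa only [Ep, Em, theta, map_mul, map_sub, map_add, AlgHom.commutes]
    using RingQuot.mkAlgHom_rel ℂ URel.ghost

theorem theta_mul_Ep : theta * Ep = -(Ep * theta) := by
  simpa only [Ep, theta, map_mul, map_neg] using RingQuot.mkAlgHom_rel ℂ URel.thEp

theorem theta_mul_Em : theta * Em = -(Em * theta) := by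
  simpa only [Em, theta, map_mul, map_neg] using RingQuot.mkAlgHom_rel ℂ URel.thEm

theorem algHom_ext {B : Type*} [Semiring B] [Algebra ℂ B] {φ ψ : UTheta →ₐ[ℂ] B}
    (hEp : φ Ep = ψ Ep) (hEm : φ Em = ψ Em) (htheta : φ theta = ψ theta) : φ = ψ := by
  refine RingQuot.ringQuot_ext' _ _ _ (FreeAlgebra.hom_ext (funext fun g => ?_))
  cases g
  exacts [hEp, hEm, htheta]

variable {B : Type*} [Ring B] [Algebra ℂ B]

def lift (e f t : B) (hef : e * f - f * e = algebraMap ℂ B (-(1 / 4)) + t)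
    (hte : t * e = -(e * t)) (htf : t * f = -(f * t)) : UTheta →ₐ[ℂ] B :=
  RingQuot.liftAlgHom ℂ ⟨FreeAlgebra.lift ℂ (UGen.rec e f t), by
    rintro _ _ ⟨⟩ <;>
      simp only [map_mul, map_neg, map_sub, map_add, AlgHom.commutes,
        FreeAlgebra.lift_ι_apply] <;>
      simp only [hef, hte, htf, map_neg]⟩

variable (e f t : B) (hef : e * f - f * e = algebraMap ℂ B (-(1 / 4)) + t)
  (hte : t * e = -(e * t)) (htf : t * f = -(f * t))

@[simp]
theorem lift_Ep : lift e f t hef hte htf Ep = e := by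
  simp [lift, Ep]

@[simp]
theorem lift_Em : lift e f t hef hte htf Em = f := by
  simp [lift, Em]

@[simp]
theorem lift_theta : lift e f t hef hte htf theta = t := by
  simp [lift, theta]

end UTheta

abbrev UThetaQuot (lam : ℂ) : Type := RingQuot (UThetaQuotRel lam)

namespace UThetaQuot

variable {lam : ℂ}

def mk : UTheta →ₐ[ℂ] UThetaQuot lam := RingQuot.mkAlgHom ℂ (UThetaQuotRel lam)

theorem mk_theta_sq : (mk UTheta.theta : UThetaQuot lam) ^ 2 = algebraMap ℂ _ (lam ^ 2) := by
  simpa only [mk, map_sub, map_pow, map_zero, AlgHom.commutes, sub_eq_zero]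
    using RingQuot.mkAlgHom_rel ℂ (UThetaQuotRel.rel (lam := lam))

theorem algHom_ext {B : Type*} [Semiring B] [Algebra ℂ B] {φ ψ : UThetaQuot lam →ₐ[ℂ] B}
    (h : φ.comp mk = ψ.comp mk) : φ = ψ :=
  RingQuot.ringQuot_ext' _ _ _ h

variable {B : Type*} [Ring B] [Algebra ℂ B]

def lift (φ : UTheta →ₐ[ℂ] B) (h : φ UTheta.theta ^ 2 = algebraMap ℂ B (lam ^ 2)) :
    UThetaQuot lam →ₐ[ℂ] B :=
  RingQuot.liftAlgHom ℂ ⟨φ, by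
    rintro _ _ ⟨⟩
    rwa [map_sub, map_zero, map_pow, AlgHom.commutes, sub_eq_zero]⟩

@[simp]
theorem lift_mk (φ : UTheta →ₐ[ℂ] B) (h : φ UTheta.theta ^ 2 = algebraMap ℂ B (lam ^ 2))
    (x : UTheta) : lift φ h (mk x) = φ x := by
  simp [lift, mk]

end UThetaQuot

open UThetaQuot in
def AZero.toUThetaQuot {lam : ℂ} (hlam : lam ≠ 0) : AZero lam →ₐ[ℂ] UThetaQuot lam :=
  AZero.lift (lam⁻¹ • mk UTheta.theta) (mk UTheta.Ep) (mk UTheta.Em)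
    (by rw [smul_mul_smul_comm, ← sq, ← sq, mk_theta_sq, Algebra.smul_def, ← map_mul,
      ← mul_pow, inv_mul_cancel₀ hlam, one_pow, map_one])
    (by rw [smul_mul_assoc, mul_smul_comm, ← map_mul, UTheta.theta_mul_Ep, map_neg, map_mul,
      smul_neg])
    (by rw [smul_mul_assoc, mul_smul_comm, ← map_mul, UTheta.theta_mul_Em, map_neg, map_mul,
      smul_neg])
    (by simpa only [smul_smul, mul_inv_cancel₀ hlam, one_smul, map_mul, map_sub, map_add,
      AlgHom.commutes] using congrArg mk UTheta.Ep_mul_Em_sub_Em_mul_Ep)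

open AZero in
def UThetaQuot.toAZero {lam : ℂ} : UThetaQuot lam →ₐ[ℂ] AZero lam :=
  UThetaQuot.lift
    (UTheta.lift Ep Em (lam • P) Ep_mul_Em_sub_Em_mul_Ep
      (by rw [smul_mul_assoc, P_mul_Ep, mul_smul_comm, smul_neg])
      (by rw [smul_mul_assoc, P_mul_Em, mul_smul_comm, smul_neg]))
    (by rw [UTheta.lift_theta, smul_pow, sq (P : AZero lam), P_mul_P,
      Algebra.algebraMap_eq_smul_one])

end

/-- For `λ ≠ 0`, `A_λ ≅ U_θ / ⟨θ² − λ²⟩` as ℂ-algebras: `A_λ` is the primitive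
quotient `B_{λ² − 1/16}` of the enveloping algebra of `osp(1,2)`. -/
theorem aZero_iso_uTheta_quot (lam : ℂ) (hlam : lam ≠ 0) :
    Nonempty (AZero lam ≃ₐ[ℂ] RingQuot (UThetaQuotRel lam)) := by
  refine ⟨AlgEquiv.ofAlgHom (AZero.toUThetaQuot hlam) UThetaQuot.toAZero ?_ ?_⟩
  · refine UThetaQuot.algHom_ext (UTheta.algHom_ext ?_ ?_ ?_) <;>
      simp [AZero.toUThetaQuot, UThetaQuot.toAZero, smul_smul, mul_inv_cancel₀ hlam]
  · refine AZero.algHom_ext ?_ ?_ ?_ <;>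
      simp [AZero.toUThetaQuot, UThetaQuot.toAZero, smul_smul, inv_mul_cancel₀ hlam]
end
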